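/- Fix an integer m ≥ 2. Let G₀, …, G_{m−1} be formal power series over ℝ with zero constant coefficient satisfying, for each 0 ≤ j ≤ m−2, G_j = X + (Σ_{p=j+1}^{m−1} G_p)·G_j. Define the map Φ on formal power series u with zero constant coefficient by Φ(u) = u + X·(1 − u)⁻¹. Then Σ_{j=0}^{m−1} G_j = Φ^{m−1}(G_{m−1}), the (m−1)-fold iterate of Φ applied to G_{m−1}. -/

import Mathlib

/-- The map `Φ(u) = u + X·(1 - u)⁻¹` on formal power series over `ℝ`. -/
noncomputable def Phi (u : PowerSeries ℝ) : PowerSeries ℝ :=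
  u + PowerSeries.X * (1 - u)⁻¹

lemma key_step (S g : PowerSeries ℝ) (hS : PowerSeries.constantCoeff S = 0)
    (hg : g = PowerSeries.X + S * g) : Phi S = S + g := by
  have h1 : (1 - S) * g = PowerSeries.X := by
    linear_combination hg
  have hunit : PowerSeries.constantCoeff (1 - S) ≠ 0 := by
    simp [hS]
  have h2 : PowerSeries.X * (1 - S)⁻¹ = g := by
    rw [← h1, mul_comm (1 - S) g, mul_assoc,
      PowerSeries.mul_inv_cancel _ hunit, mul_one]
  rw [Phi, h2]

theorem godelm_phi_reduction
    (m : ℕ) (hm : 2 ≤ m)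
    (G : ℕ → PowerSeries ℝ)
    (hG0 : ∀ j, j ≤ m - 1 → PowerSeries.constantCoeff (G j) = 0)
    (hGrec : ∀ j, j ≤ m - 2 →
      G j = PowerSeries.X + (∑ p ∈ Finset.Icc (j + 1) (m - 1), G p) * G j) :
    ∑ j ∈ Finset.range m, G j = Phi^[m - 1] (G (m - 1)) := by
  have main : ∀ k, k ≤ m - 1 →
      Phi^[k] (G (m - 1)) = ∑ p ∈ Finset.Icc (m - 1 - k) (m - 1), G p := by
    intro k hk
    induction k with
    | zero => simp
    | succ k ih =>
      have hk' : k ≤ m - 1 := Nat.le_of_succ_le hk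
      rw [Function.iterate_succ_apply', ih hk']
      set j := m - 1 - (k + 1) with hj
      have hj1 : j + 1 = m - 1 - k := by omega
      have hjm : j ≤ m - 2 := by omega
      have hS0 : PowerSeries.constantCoeff
          (∑ p ∈ Finset.Icc (j + 1) (m - 1), G p) = 0 := by
        rw [map_sum]
        apply Finset.sum_eq_zero
        intro p hp
        exact hG0 p (Finset.mem_Icc.mp hp).2
      have := key_step _ (G j) hS0 (hGrec j hjm)
      have hins : Finset.Icc j (m - 1) = insert j (Finset.Icc (j + 1) (m - 1)) := by
        ext x
        simp only [Finset.mem_Icc, Finset.mem_insert]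
        omega
      rw [hj1] at this
      rw [hins, Finset.sum_insert (by simp), hj1, this]
      ring
  have h0 : (0 : ℕ) = m - 1 - (m - 1) := by omega
  rw [main (m - 1) le_rfl, ← h0]
  congr 1
  ext x
  simp only [Finset.mem_range, Finset.mem_Icc]
  omega
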